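/- Let E be a finite-dimensional complex inner product space and T : E →ₗ[ℂ] E a symmetric linear map (⟪T x, y⟫ = ⟪x, T y⟫ for all x, y). Then every eigenspace of T has dimension at most one (T has simple spectrum) if and only if T admits a cyclic vector, i.e. there exists v ∈ E with Submodule.span ℂ (Set.range (fun k : ℕ => (T ^ k) v)) = ⊤. -/

import Mathlib

/-!
A symmetric operator on a finite-dimensional complex inner product space is diagonalizable. If
every eigenspace is a line spanned by `w μ`, then `v = ∑ μ, w μ` is cyclic: applying the Lagrange
interpolation polynomial of the eigenvalues that is `1` at `μ` and `0` at the others to `T`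
recovers `w μ` from `v`.

Conversely, for any operator `T` with a cyclic vector `v` and any scalar `μ`, the subspace
`span {v} + range (T - μ)` is `T`-invariant and contains `v`, hence is everything; by rank–nullity
`ker (T - μ)` has dimension at most one.
-/

open Module Polynomial

namespace Module.End

section CommSemiring

variable {R M : Type*} [CommSemiring R] [AddCommMonoid M] [Module R M]

def cyclicSpan (T : End R M) (v : M) : Submodule R M :=
  Submodule.span R (Set.range fun k : ℕ => (T ^ k) v)

theorem aeval_apply_mem_cyclicSpan (T : End R M) (v : M) (p : R[X]) :
    aeval T p v ∈ T.cyclicSpan v := by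
  rw [aeval_eq_sum_range, LinearMap.sum_apply]
  exact Submodule.sum_mem _ fun k _ =>
    Submodule.smul_mem _ _ (Submodule.subset_span ⟨k, rfl⟩)

theorem cyclicSpan_le {T : End R M} {v : M} {W : Submodule R M} (hv : v ∈ W)
    (hW : ∀ x ∈ W, T x ∈ W) : T.cyclicSpan v ≤ W := by
  refine Submodule.span_le.2 <| Set.range_subset_iff.2 fun k => ?_
  induction k with
  | zero => simpa using hv
  | succ k ih =>
    rw [SetLike.mem_coe, pow_succ', mul_apply]
    exact hW _ ih

end CommSemiring

variable {K V : Type*} [Field K] [AddCommGroup V] [Module K V]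

theorem finrank_eigenspace_le_one_of_cyclicSpan_eq_top [FiniteDimensional K V] {T : End K V}
    {v : V} (hv : T.cyclicSpan v = ⊤) (μ : K) : finrank K (T.eigenspace μ) ≤ 1 := by
  rw [eigenspace_def]
  set S := T - μ • 1
  have hcover : (⊤ : Submodule K V) ≤ (K ∙ v) ⊔ LinearMap.range S := by
    refine hv ▸ cyclicSpan_le (Submodule.mem_sup_left (Submodule.mem_span_singleton_self v))
      fun x hx => ?_
    have hTx : T x = S x + μ • x := by simp [S]
    exact hTx ▸ Submodule.add_mem _ (Submodule.mem_sup_right (LinearMap.mem_range_self S x))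
      (Submodule.smul_mem _ μ hx)
  have hdim := (Submodule.finrank_mono hcover).trans
    (Submodule.finrank_add_le_finrank_add_finrank _ _)
  have hv1 : finrank K (K ∙ v) ≤ 1 := (finrank_span_le_card {v}).trans (by simp)
  have := LinearMap.finrank_range_add_finrank_ker S
  rw [finrank_top] at hdim
  omega

theorem mem_cyclicSpan_sum_of_mem_eigenspace {T : End K V} (s : Finset K) {w : K → V}
    (hw : ∀ μ ∈ s, w μ ∈ T.eigenspace μ) {μ : K} (hμ : μ ∈ s) :
    w μ ∈ T.cyclicSpan (∑ ν ∈ s, w ν) := by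
  classical
  suffices aeval T (Lagrange.basis s id μ) (∑ ν ∈ s, w ν) = w μ from
    this ▸ aeval_apply_mem_cyclicSpan T _ _
  set p := Lagrange.basis s id μ
  have haeval ν (hν : ν ∈ s) : aeval T p (w ν) = p.eval ν • w ν :=
    aeval_apply_of_mem_apply_eq_smul (mem_eigenspace_iff.1 (hw ν hν))
  have hself : p.eval μ = 1 := Lagrange.eval_basis_self (Set.injOn_id _) hμ
  have hother ν (hν : ν ∈ s) (hne : ν ≠ μ) : p.eval ν = 0 :=
    Lagrange.eval_basis_of_ne (v := id) hne.symm hν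
  rw [map_sum, Finset.sum_eq_single_of_mem μ hμ fun ν hν hne => ?_, haeval μ hμ, hself, one_smul]
  rw [haeval ν hν, hother ν hν hne, zero_smul]

theorem exists_cyclicSpan_eq_top_of_finrank_eigenspace_le_one [FiniteDimensional K V]
    {T : End K V} (hdiag : ⨆ μ, T.eigenspace μ = ⊤)
    (hsimple : ∀ μ, finrank K (T.eigenspace μ) ≤ 1) :
    ∃ v, T.cyclicSpan v = ⊤ := by
  have hprincipal μ : ∃ w, T.eigenspace μ = K ∙ w :=
    ((Submodule.finrank_le_one_iff_isPrincipal _).1 (hsimple μ)).principal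
  choose w hw using hprincipal
  set s := T.finite_hasEigenvalue.toFinset
  refine ⟨∑ μ ∈ s, w μ, eq_top_iff.2 <| hdiag ▸ iSup_le fun μ => ?_⟩
  by_cases hμ : T.HasEigenvalue μ
  · rw [hw μ, Submodule.span_singleton_le_iff_mem]
    exact mem_cyclicSpan_sum_of_mem_eigenspace s
      (fun ν _ => hw ν ▸ Submodule.mem_span_singleton_self _) (by simpa [s] using hμ)
  · rw [hasEigenvalue_iff, not_not] at hμ
    simp [hμ]

end Module.End

open Module.End in
/-- A symmetric endomorphism of a finite-dimensional complex inner product space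
has simple spectrum (all eigenspaces of dimension at most one) if and only if it
admits a cyclic vector. -/
theorem stmt_3 (E : Type*) [NormedAddCommGroup E] [InnerProductSpace ℂ E]
    [FiniteDimensional ℂ E] (T : E →ₗ[ℂ] E)
    (hT : ∀ x y : E, inner ℂ (T x) y = (inner ℂ x (T y) : ℂ)) :
    (∀ μ : ℂ, Module.finrank ℂ (Module.End.eigenspace T μ) ≤ 1) ↔
      ∃ v : E, Submodule.span ℂ (Set.range fun k : ℕ => (T ^ k) v) = ⊤ := by
  have hdiag : ⨆ μ, eigenspace T μ = ⊤ :=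
    Submodule.orthogonal_eq_bot_iff.mp
      (LinearMap.IsSymmetric.orthogonalComplement_iSup_eigenspaces_eq_bot hT)
  exact ⟨exists_cyclicSpan_eq_top_of_finrank_eigenspace_le_one hdiag,
    fun ⟨_, hv⟩ => finrank_eigenspace_le_one_of_cyclicSpan_eq_top hv⟩
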